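/- Fix an integer k ≥ 2, an integer n ≥ 2, a real α > 0 such that d = α log₂ n is a positive integer, let p = (1 − 2^{−2k/α})^{1/k}, and assume p ≤ 1/2. For an instance (U_1,…,U_k) sampled from the planted distribution with any fixed locations s = (s_1,…,s_k) ∈ {1,…,n}^k, the probability that the instance has more than one solution (i.e., some solution other than s) is less than n^{−k}. -/

import Mathlib

open Finset

/-- The weight of a `p`-biased bit: `1` has probability `p`, `0` has probability `1 - p`. -/
noncomputable def bern (p : ℝ) (b : Bool) : ℝ := if b then p else 1 - p

/-- Vectors `u 0, …, u (k-1) ∈ {0,1}^d` are orthogonal if at every coordinate at least one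
of them has a zero. -/
def Orthog {k d : ℕ} (u : Fin k → Fin d → Bool) : Prop :=
  ∀ j : Fin d, ∃ l : Fin k, u l j = false

instance {k d : ℕ} : DecidablePred (@Orthog k d) := fun u =>
  inferInstanceAs (Decidable (∀ j : Fin d, ∃ l : Fin k, u l j = false))

/-- The number of ones in a bit string. -/
def ones {k : ℕ} (x : Fin k → Bool) : ℕ := (Finset.univ.filter fun i => x i = true).card

/-- The planted per-coordinate distribution
`P_k(x) = p^m (1-p)^{k-m} - (-1)^{k-m} p^k`, where `m` is the number of ones in `x`. -/
noncomputable def Pk (k : ℕ) (p : ℝ) (x : Fin k → Bool) : ℝ :=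
  p ^ ones x * (1 - p) ^ (k - ones x) - (-1 : ℝ) ^ (k - ones x) * p ^ k

/-- The probability of an instance `U` under the planted distribution with locations `s`:
the `d` coordinates of the tuple of planted vectors `(U_{1,s_1},…,U_{k,s_k})` are i.i.d.
according to `P_k`, and all entries of all other vectors are i.i.d. `p`-biased. -/
noncomputable def plantedWeight (k n d : ℕ) (p : ℝ) (s : Fin k → Fin n)
    (U : Fin k → Fin n → Fin d → Bool) : ℝ :=
  (∏ j : Fin d, Pk k p (fun l => U l (s l) j)) *
    ∏ l : Fin k, ∏ i ∈ Finset.univ.filter (fun i : Fin n => i ≠ s l),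
      ∏ j : Fin d, bern p (U l i j)

/-!
Union bound over the `n^k - 1` tuples `t ≠ s`. Fix such a `t`; the coordinates are
independent, so `t` is a solution with probability `q^d`, where `q` is the probability that a
single coordinate of the vectors at `t` is not all ones. Expanding
`P_k(x) = ∏ₗ bern p (x l) - p^k ∏ₗ (±1)`, the signed term sums to zero against any function
that ignores the planted entry of a row `l` with `t l ≠ s l`, so the vectors at `t` behave like
i.i.d. `p`-biased vectors and `q = 1 - p^k`. The choice of `p` and `d` makes
`(1 - p^k)^d = n^{-2k}`, and `(n^k - 1) n^{-2k} < n^{-k}`.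
-/

lemma prod_ite_eq_pow_ones {k : ℕ} (x : Fin k → Bool) (a b : ℝ) :
    ∏ l, (if x l then a else b) = a ^ ones x * b ^ (k - ones x) := by
  have hcard := card_filter_add_card_filter_not (s := (univ : Finset (Fin k))) (x · = true)
  rw [card_univ, Fintype.card_fin] at hcard
  rw [prod_ite, prod_const, prod_const, ones]
  congr 2
  omega

lemma ones_le {k : ℕ} (x : Fin k → Bool) : ones x ≤ k :=
  (card_le_univ _).trans_eq (Fintype.card_fin k)

lemma Pk_eq_prod_bern_sub (k : ℕ) (p : ℝ) (x : Fin k → Bool) :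
    Pk k p x = ∏ l, bern p (x l) - p ^ k * ∏ l, (if x l then 1 else -1) := by
  simp only [Pk, bern, prod_ite_eq_pow_ones]
  ring

lemma Pk_nonneg {k : ℕ} {p : ℝ} (hp0 : 0 ≤ p) (hp2 : p ≤ 1 / 2) (x : Fin k → Bool) :
    0 ≤ Pk k p x := by
  have hsplit : p ^ k = p ^ ones x * p ^ (k - ones x) := by
    rw [← pow_add, Nat.add_sub_cancel' (ones_le x)]
  have hsign : (-1 : ℝ) ^ (k - ones x) * p ^ k ≤ p ^ k := by
    rcases neg_one_pow_eq_or ℝ (k - ones x) with h | h <;> rw [h] <;>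
      nlinarith [pow_nonneg hp0 k]
  have hlead : p ^ k ≤ p ^ ones x * (1 - p) ^ (k - ones x) := by
    rw [hsplit]
    gcongr
    linarith
  rw [Pk]
  linarith

lemma bern_nonneg {p : ℝ} (hp0 : 0 ≤ p) (hp1 : p ≤ 1) (b : Bool) : 0 ≤ bern p b := by
  cases b <;> simp [bern] <;> linarith

lemma plantedWeight_nonneg {k n d : ℕ} {p : ℝ} (hp0 : 0 ≤ p) (hp2 : p ≤ 1 / 2)
    (s : Fin k → Fin n) (U : Fin k → Fin n → Fin d → Bool) :
    0 ≤ plantedWeight k n d p s U :=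
  mul_nonneg (prod_nonneg fun _ _ => Pk_nonneg hp0 hp2 _)
    (prod_nonneg fun _ _ => prod_nonneg fun _ _ => prod_nonneg fun _ _ =>
      bern_nonneg hp0 (by linarith) _)

section BernoulliSums

variable {ι : Type*} [Fintype ι] [DecidableEq ι]

lemma sum_prod_bern (p : ℝ) : ∑ v : ι → Bool, ∏ i, bern p (v i) = 1 := by
  rw [← Fintype.prod_sum]
  simp [bern]

lemma sum_prod_bern_mul_ite (p : ℝ) (b : ι) :
    ∑ v : ι → Bool, (∏ i, bern p (v i)) * (if v b then 1 else 0) = p := by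
  have hfactor (v : ι → Bool) : (∏ i, bern p (v i)) * (if v b then 1 else 0) =
      ∏ i, bern p (v i) * (if i = b then (if v i then 1 else 0) else 1) := by
    rw [prod_mul_distrib, prod_ite_eq' univ b fun i => if v i then (1 : ℝ) else 0]
    simp
  rw [sum_congr rfl fun v _ => hfactor v,
    ← Fintype.prod_sum fun i c => bern p c * if i = b then (if c then 1 else 0) else 1]
  have hcoord (i : ι) : ∑ c : Bool, bern p c * (if i = b then (if c then 1 else 0) else 1) =
      if i = b then p else 1 := by
    by_cases hi : i = b <;> simp [hi, bern]
  rw [prod_congr rfl fun i _ => hcoord i, prod_ite_eq' univ b fun _ => p]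
  simp

lemma sum_sign_mul_eq_zero (a : ι) (h : (ι → Bool) → ℝ)
    (hh : ∀ v c, h (Function.update v a c) = h v) :
    ∑ v : ι → Bool, (if v a then 1 else -1) * h v = 0 := by
  have hflip : Function.Involutive fun v : ι → Bool => Function.update v a (!v a) :=
    fun v => by simp
  have hanti : ∑ v : ι → Bool, (if v a then 1 else -1) * h v =
      -∑ v : ι → Bool, (if v a then 1 else -1) * h v := by
    conv_lhs => rw [← Equiv.sum_comp (hflip.toPerm _)]
    rw [← sum_neg_distrib]
    refine sum_congr rfl fun v _ => ?_
    simp only [Function.Involutive.coe_toPerm, Function.update_self, hh]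
    cases v a <;> simp
  linarith

end BernoulliSums

section Coordinate

variable {k n : ℕ} (p : ℝ) (s : Fin k → Fin n)

noncomputable def plantedCoordWeight (V : Fin k → Fin n → Bool) : ℝ :=
  Pk k p (fun l => V l (s l)) * ∏ l, ∏ i ∈ univ.filter (fun i => i ≠ s l), bern p (V l i)

lemma plantedCoordWeight_eq (V : Fin k → Fin n → Bool) :
    plantedCoordWeight p s V = ∏ l, ∏ i, bern p (V l i) -
      p ^ k * ∏ l, ((if V l (s l) then 1 else -1) *
        ∏ i ∈ univ.filter (fun i => i ≠ s l), bern p (V l i)) := by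
  rw [plantedCoordWeight, Pk_eq_prod_bern_sub, sub_mul, mul_assoc, ← prod_mul_distrib,
    ← prod_mul_distrib]
  congr 1
  refine prod_congr rfl fun l _ => ?_
  rw [filter_ne', mul_prod_erase _ (fun i => bern p (V l i)) (mem_univ _)]

lemma sum_prod_mul_plantedCoordWeight (g : Fin k → (Fin n → Bool) → ℝ) (l₀ : Fin k)
    (hg : ∀ v c, g l₀ (Function.update v (s l₀) c) = g l₀ v) :
    ∑ V : Fin k → Fin n → Bool, (∏ l, g l (V l)) * plantedCoordWeight p s V =
      ∏ l, ∑ v : Fin n → Bool, (∏ i, bern p (v i)) * g l v := by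
  set rest : Fin k → (Fin n → Bool) → ℝ :=
    fun l v => ∏ i ∈ univ.filter (fun i => i ≠ s l), bern p (v i)
  have hsplit (V : Fin k → Fin n → Bool) : (∏ l, g l (V l)) * plantedCoordWeight p s V =
      ∏ l, (∏ i, bern p (V l i)) * g l (V l) -
        p ^ k * ∏ l, (if V l (s l) then 1 else -1) * (g l (V l) * rest l (V l)) := by
    rw [plantedCoordWeight_eq]
    simp only [rest, mul_sub, prod_mul_distrib]
    ring
  have hsigned :
      ∏ l, ∑ v : Fin n → Bool, (if v (s l) then 1 else -1) * (g l v * rest l v) = 0 := by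
    refine prod_eq_zero (mem_univ l₀) (sum_sign_mul_eq_zero _ _ fun v c => ?_)
    simp only [rest, hg]
    congr 1
    refine prod_congr rfl fun i hi => ?_
    rw [Function.update_of_ne (mem_filter.1 hi).2]
  rw [sum_congr rfl fun V _ => hsplit V, sum_sub_distrib, ← mul_sum,
    ← Fintype.prod_sum fun l v => (∏ i, bern p (v i)) * g l v,
    ← Fintype.prod_sum fun l v => (if v (s l) then 1 else -1) * (g l v * rest l v),
    hsigned, mul_zero, sub_zero]

lemma sum_plantedCoordWeight (hk : k ≠ 0) :
    ∑ V : Fin k → Fin n → Bool, plantedCoordWeight p s V = 1 := by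
  have := sum_prod_mul_plantedCoordWeight p s (fun _ _ => 1) ⟨0, Nat.pos_of_ne_zero hk⟩
    fun _ _ => rfl
  simpa [sum_prod_bern] using this

lemma sum_prod_ite_mul_plantedCoordWeight {t : Fin k → Fin n} {l₀ : Fin k}
    (h : t l₀ ≠ s l₀) :
    ∑ V : Fin k → Fin n → Bool,
      (∏ l, if V l (t l) then 1 else 0) * plantedCoordWeight p s V = p ^ k := by
  rw [sum_prod_mul_plantedCoordWeight p s (fun l v => if v (t l) then 1 else 0) l₀
      fun v c => by rw [Function.update_of_ne h],
    prod_congr rfl fun l _ => sum_prod_bern_mul_ite p (t l), prod_const, card_univ,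
    Fintype.card_fin]

lemma sum_ite_exists_false_plantedCoordWeight (hk : k ≠ 0) {t : Fin k → Fin n} (hts : t ≠ s) :
    ∑ V : Fin k → Fin n → Bool,
      (if ∃ l, V l (t l) = false then plantedCoordWeight p s V else 0) = 1 - p ^ k := by
  obtain ⟨l₀, hl₀⟩ : ∃ l, t l ≠ s l := Function.ne_iff.1 hts
  have hcompl (V : Fin k → Fin n → Bool) :
      (if ∃ l, V l (t l) = false then plantedCoordWeight p s V else 0) =
        plantedCoordWeight p s V -
          (∏ l, if V l (t l) then 1 else 0) * plantedCoordWeight p s V := by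
    rw [Fintype.prod_boole]
    by_cases hV : ∀ l, V l (t l) = true <;> simp [hV]
  rw [sum_congr rfl fun V _ => hcompl V, sum_sub_distrib, sum_plantedCoordWeight p s hk,
    sum_prod_ite_mul_plantedCoordWeight p s hl₀]

end Coordinate

lemma plantedWeight_eq_prod (k n d : ℕ) (p : ℝ) (s : Fin k → Fin n)
    (U : Fin k → Fin n → Fin d → Bool) :
    plantedWeight k n d p s U = ∏ j, plantedCoordWeight p s (fun l i => U l i j) := by
  simp only [plantedWeight, plantedCoordWeight]
  rw [prod_mul_distrib]
  congr 1
  rw [prod_congr rfl fun l _ => prod_comm, prod_comm]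

lemma sum_ite_orthog_plantedWeight {k n : ℕ} (d : ℕ) (p : ℝ) {s t : Fin k → Fin n}
    (hk : k ≠ 0) (hts : t ≠ s) :
    ∑ U : Fin k → Fin n → Fin d → Bool,
      (if Orthog (fun l => U l (t l)) then plantedWeight k n d p s U else 0) = (1 - p ^ k) ^ d := by
  let transpose : (Fin d → Fin k → Fin n → Bool) ≃ (Fin k → Fin n → Fin d → Bool) :=
    ⟨fun W l i j => W j l i, fun U j l i => U l i j, fun _ => rfl, fun _ => rfl⟩
  have hcoord (W : Fin d → Fin k → Fin n → Bool) :
      (if Orthog (fun l => transpose W l (t l)) then plantedWeight k n d p s (transpose W)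
        else 0) =
        ∏ j, if ∃ l, W j l (t l) = false then plantedCoordWeight p s (W j) else 0 := by
    rw [Fintype.prod_ite_zero, plantedWeight_eq_prod]
    congr 1
  rw [← Equiv.sum_comp transpose, sum_congr rfl fun W _ => hcoord W,
    ← Fintype.prod_sum fun _ V =>
      if ∃ l, V l (t l) = false then plantedCoordWeight p s V else 0,
    prod_congr rfl fun _ _ => sum_ite_exists_false_plantedCoordWeight p s hk hts, prod_const,
    card_univ, Fintype.card_fin]

lemma sum_ite_exists_le_sum_sum {α β : Type*} [Fintype α] [Fintype β] (Q : β → Prop)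
    [DecidablePred Q] (P : β → α → Prop) [∀ t x, Decidable (P t x)]
    [∀ x, Decidable (∃ t, Q t ∧ P t x)] (w : α → ℝ) (hw : ∀ x, 0 ≤ w x) :
    ∑ x, (if ∃ t, Q t ∧ P t x then w x else 0) ≤
      ∑ t ∈ univ.filter Q, ∑ x, if P t x then w x else 0 := by
  have hterm_nonneg (t : β) (x : α) : 0 ≤ if P t x then w x else 0 := by
    split_ifs
    exacts [hw x, le_rfl]
  rw [sum_comm]
  refine sum_le_sum fun x _ => ?_
  split_ifs with hx
  · obtain ⟨t, hQ, hP⟩ := hx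
    simpa only [if_pos hP] using
      single_le_sum (fun t _ => hterm_nonneg t x) (mem_filter.2 ⟨mem_univ t, hQ⟩)
  · exact sum_nonneg fun t _ => hterm_nonneg t x

lemma one_sub_two_rpow_neg_div_nonneg {c α : ℝ} (hc : 0 ≤ c) (hα : 0 ≤ α) :
    0 ≤ 1 - (2 : ℝ) ^ (-c / α) :=
  sub_nonneg.2 (Real.rpow_le_one_of_one_le_of_nonpos one_le_two
    (div_nonpos_of_nonpos_of_nonneg (neg_nonpos.2 hc) hα))

lemma one_sub_pow_pow_eq_rpow {k n d : ℕ} {α p : ℝ} (hk : k ≠ 0) (hn : 0 < n) (hα : 0 < α)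
    (hdα : (d : ℝ) = α * Real.logb 2 n)
    (hp : p = (1 - (2 : ℝ) ^ (-(2 * (k : ℝ)) / α)) ^ ((1 : ℝ) / k)) :
    (1 - p ^ k) ^ d = (n : ℝ) ^ (-(2 * (k : ℝ))) := by
  rw [hp, one_div,
    Real.rpow_inv_natCast_pow (one_sub_two_rpow_neg_div_nonneg (by positivity) hα.le) hk, sub_sub_cancel,
    ← Real.rpow_mul_natCast zero_le_two, hdα]
  have hn' : (0 : ℝ) < n := Nat.cast_pos.2 hn
  rw [show -(2 * (k : ℝ)) / α * (α * Real.logb 2 n) = Real.logb 2 n * -(2 * (k : ℝ)) by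
      field_simp, Real.rpow_mul zero_le_two, Real.rpow_logb two_pos (by norm_num) hn']

theorem stmt11_general (k n : ℕ) (hk : 2 ≤ k) (hn : 2 ≤ n) (α : ℝ) (hα : 0 < α)
    (d : ℕ) (hdα : (d : ℝ) = α * Real.logb 2 n)
    (p : ℝ) (hp : p = (1 - (2 : ℝ) ^ (-(2 * (k : ℝ)) / α)) ^ ((1 : ℝ) / k))
    (hp2 : p ≤ 1 / 2) (s : Fin k → Fin n) :
    (∑ U : Fin k → Fin n → Fin d → Bool,
        if ∃ t : Fin k → Fin n, t ≠ s ∧ Orthog (fun l => U l (t l)) then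
          plantedWeight k n d p s U
        else 0) < (n : ℝ) ^ (-(k : ℝ)) := by
  have hk0 : k ≠ 0 := by omega
  have hn0 : (0 : ℝ) < n := by exact_mod_cast (show 0 < n by omega)
  have hp0 : 0 ≤ p :=
    hp ▸ Real.rpow_nonneg (one_sub_two_rpow_neg_div_nonneg (by positivity) hα.le) _
  have hcard :
      ((univ.filter fun t : Fin k → Fin n => t ≠ s).card : ℝ) = (n : ℝ) ^ k - 1 := by
    rw [filter_ne', card_erase_of_mem (mem_univ s), card_univ, Fintype.card_fun,
      Fintype.card_fin, Fintype.card_fin, Nat.cast_sub (Nat.one_le_pow _ _ (by omega))]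
    push_cast
    ring
  calc _ ≤ ∑ t ∈ univ.filter fun t : Fin k → Fin n => t ≠ s,
          ∑ U : Fin k → Fin n → Fin d → Bool,
            (if Orthog (fun l => U l (t l)) then plantedWeight k n d p s U else 0) :=
        sum_ite_exists_le_sum_sum _ _ _ (plantedWeight_nonneg hp0 hp2 s)
    _ = ((n : ℝ) ^ k - 1) * (n : ℝ) ^ (-(2 * (k : ℝ))) := by
        rw [sum_congr rfl fun t ht => sum_ite_orthog_plantedWeight d p hk0 (mem_filter.1 ht).2,
          sum_const, nsmul_eq_mul, hcard, one_sub_pow_pow_eq_rpow hk0 (by omega) hα hdα hp]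
    _ < (n : ℝ) ^ k * (n : ℝ) ^ (-(2 * (k : ℝ))) := by gcongr; linarith
    _ = (n : ℝ) ^ (-(k : ℝ)) := by
        rw [← Real.rpow_natCast, ← Real.rpow_add hn0]
        ring_nf

/-- For an instance sampled from the planted distribution with any fixed
locations `s`, the probability that the instance has more than one solution (i.e. some
solution other than `s`) is less than `n^{-k}`. -/
theorem stmt11 (k n : ℕ) (hk : 2 ≤ k) (hn : 2 ≤ n) (α : ℝ) (hα : 0 < α)
    (d : ℕ) (hd : 0 < d) (hdα : (d : ℝ) = α * Real.logb 2 n)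
    (p : ℝ) (hp : p = (1 - (2 : ℝ) ^ (-(2 * (k : ℝ)) / α)) ^ ((1 : ℝ) / k))
    (hp2 : p ≤ 1 / 2) (s : Fin k → Fin n) :
    (∑ U : Fin k → Fin n → Fin d → Bool,
        if ∃ t : Fin k → Fin n, t ≠ s ∧ Orthog (fun l => U l (t l)) then
          plantedWeight k n d p s U
        else 0) < (n : ℝ) ^ (-(k : ℝ)) :=
  stmt11_general k n hk hn α hα d hdα p hp hp2 s
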